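/- Let G=(V,E) be a graph and f : V → {0,1,2} with k = ω(f). There exists a minimal perfect Roman dominating function g on G with f ≤ g if and only if there exists a set V' ⊆ V with |V'| ≤ k and V_2(f) ⊆ V' such that (i) every v ∈ V' has a private neighbor in V_0(f) \ V' with respect to G and V', i.e., some u ∈ N(v) ∩ (V_0(f) \ V') with N(u) ∩ V' = {v}, and (ii) |N(u) ∩ V'| ≠ 1 for every u ∈ V_1(f) \ V'. -/

import Mathlib

/-- A perfect Roman dominating function: every vertex with value 0 has exactly one
neighbor with value 2. -/
def IsPRDF {V : Type*} (G : SimpleGraph V) (f : V → Fin 3) : Prop :=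
  ∀ v, f v = 0 → ∃! u, G.Adj v u ∧ f u = 2

/-- The weight of a function `f : V → {0,1,2}`. -/
def weight {V : Type*} [Fintype V] (f : V → Fin 3) : ℕ := ∑ v, (f v : ℕ)

lemma fin3_cases : ∀ a : Fin 3, a = 0 ∨ a = 1 ∨ a = 2 := by decide
lemma fin3_le2 : ∀ a : Fin 3, a ≤ 2 := by decide
lemma fin3_le0 : ∀ a : Fin 3, a ≤ 0 → a = 0 := by decide
lemma fin3_eq2_of_le : ∀ a b : Fin 3, a ≤ b → a = 2 → b = 2 := by decide
lemma fin3_one_le : ∀ a : Fin 3, (1:Fin 3) ≤ a → a = 1 ∨ a = 2 := by decide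

/-- In a minimal pRdf, every vertex of value 2 has a private neighbor of value 0. -/
lemma lemA {V : Type*} [DecidableEq V] {G : SimpleGraph V} {g : V → Fin 3}
    (hg : Minimal (IsPRDF G) g) (v : V) (h2 : g v = 2) :
    ∃ u, G.Adj v u ∧ g u = 0 ∧ ∀ y, G.Adj u y → g y = 2 → y = v := by
  have hle : Function.update g v 1 ≤ g := by
    intro x
    by_cases hx : x = v
    · subst hx; simp [h2, fin3_le2]
    · simp [Function.update_of_ne hx]
  have hnot : ¬ IsPRDF G (Function.update g v 1) := by
    intro hP
    have h1 : g v ≤ Function.update g v 1 v := hg.2 hP hle v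
    rw [h2, Function.update_self] at h1
    exact absurd h1 (by decide)
  simp only [IsPRDF, not_forall] at hnot
  obtain ⟨u, hu0, hnu⟩ := hnot
  have huv : u ≠ v := by
    intro e; subst e
    rw [Function.update_self] at hu0
    exact absurd hu0 (by decide)
  rw [Function.update_of_ne huv] at hu0
  obtain ⟨x, ⟨hxadj, hx2⟩, huniq⟩ := hg.1 u hu0
  have hxv : x = v := by
    by_contra hxv
    apply hnu
    refine ⟨x, ⟨hxadj, by rw [Function.update_of_ne hxv]; exact hx2⟩, ?_⟩
    rintro y ⟨hyadj, hy2⟩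
    have hyv : y ≠ v := by
      intro e; subst e
      rw [Function.update_self] at hy2
      exact absurd hy2 (by decide)
    rw [Function.update_of_ne hyv] at hy2
    exact huniq y ⟨hyadj, hy2⟩
  subst hxv
  exact ⟨u, hxadj.symm, hu0, fun y hy hgy => huniq y ⟨hy, hgy⟩⟩

/-- In a minimal pRdf, a vertex of value 1 never has exactly one neighbor of value 2. -/
lemma lemB {V : Type*} [Fintype V] [DecidableEq V] {G : SimpleGraph V} [DecidableRel G.Adj]
    {g : V → Fin 3} (hg : Minimal (IsPRDF G) g) (u : V) (h1 : g u = 1) :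
    ((G.neighborFinset u).filter (fun w => g w = 2)).card ≠ 1 := by
  intro hcard
  obtain ⟨w, hw⟩ := Finset.card_eq_one.mp hcard
  have hwmem : w ∈ (G.neighborFinset u).filter (fun w => g w = 2) := by
    rw [hw]; exact Finset.mem_singleton_self w
  rw [Finset.mem_filter, SimpleGraph.mem_neighborFinset] at hwmem
  obtain ⟨hwadj, hw2⟩ := hwmem
  have hwu : w ≠ u := hwadj.ne'
  set h : V → Fin 3 := Function.update g u 0 with hh
  have hle : h ≤ g := by
    intro x
    by_cases hx : x = u
    · subst hx; simp [hh, Fin.zero_le]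
    · simp [hh, Function.update_of_ne hx]
  have hP : IsPRDF G h := by
    intro x hx0
    by_cases hxu : x = u
    · rw [hxu]
      refine ⟨w, ⟨hwadj, by rw [hh, Function.update_of_ne hwu]; exact hw2⟩, ?_⟩
      rintro y ⟨hyadj, hy2⟩
      have hyu : y ≠ u := hyadj.ne'
      rw [hh, Function.update_of_ne hyu] at hy2
      have : y ∈ (G.neighborFinset u).filter (fun w => g w = 2) := by
        rw [Finset.mem_filter, SimpleGraph.mem_neighborFinset]; exact ⟨hyadj, hy2⟩
      rw [hw] at this; exact Finset.mem_singleton.mp this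
    · rw [hh, Function.update_of_ne hxu] at hx0
      obtain ⟨y, ⟨hyadj, hy2⟩, huniq⟩ := hg.1 x hx0
      have hyu : y ≠ u := by intro e; subst e; rw [h1] at hy2; exact absurd hy2 (by decide)
      refine ⟨y, ⟨hyadj, by rw [hh, Function.update_of_ne hyu]; exact hy2⟩, ?_⟩
      rintro z ⟨hzadj, hz2⟩
      have hzu : z ≠ u := by
        intro e; subst e; rw [hh, Function.update_self] at hz2; exact absurd hz2 (by decide)
      rw [hh, Function.update_of_ne hzu] at hz2
      exact huniq z ⟨hzadj, hz2⟩
  have := hg.2 hP hle u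
  rw [h1, hh, Function.update_self] at this
  exact absurd this (by decide : ¬ ((1:Fin 3) ≤ (0:Fin 3)))

/-- Iteratively extend a partial set of 2-vertices to one satisfying condition (ii),
adding at most one vertex per problematic 1-vertex. -/
lemma extend {V : Type*} [Fintype V] [DecidableEq V] (G : SimpleGraph V) [DecidableRel G.Adj]
    (f g : V → Fin 3)
    (hB : ∀ u, f u = 1 → g u = 1 →
      ((G.neighborFinset u).filter (fun w => g w = 2)).card ≠ 1) :
    ∀ (n : ℕ) (W : Finset V), (∀ w ∈ W, g w = 2) →
      ((Finset.univ.filter (fun u => f u = 1 ∧ g u = 1 ∧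
        ((G.neighborFinset u).filter (fun w => w ∈ W)).card ≤ 1)).card ≤ n) →
      ∃ V' : Finset V, W ⊆ V' ∧ (∀ w ∈ V', g w = 2) ∧ V'.card ≤ W.card + n ∧
        ∀ u, f u = 1 → g u = 1 →
          ((G.neighborFinset u).filter (fun w => w ∈ V')).card ≠ 1 := by
  intro n
  induction n with
  | zero =>
    intro W hW hcard
    refine ⟨W, subset_rfl, hW, le_of_eq (by omega), ?_⟩
    intro u h1 h2 hc1
    have hmem : u ∈ Finset.univ.filter (fun u => f u = 1 ∧ g u = 1 ∧
        ((G.neighborFinset u).filter (fun w => w ∈ W)).card ≤ 1) := by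
      simp only [Finset.mem_filter, Finset.mem_univ, true_and]
      exact ⟨h1, h2, by omega⟩
    have := Finset.card_pos.mpr ⟨u, hmem⟩
    omega
  | succ n ih =>
    intro W hW hcard
    by_cases hex : ∃ u, f u = 1 ∧ g u = 1 ∧
        ((G.neighborFinset u).filter (fun w => w ∈ W)).card = 1
    · obtain ⟨u, hu1, hug, hcnt⟩ := hex
      have hsub : (G.neighborFinset u).filter (fun w => w ∈ W) ⊆
          (G.neighborFinset u).filter (fun w => g w = 2) := by
        intro x hx
        rw [Finset.mem_filter] at hx ⊢
        exact ⟨hx.1, hW x hx.2⟩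
      have hlt : ((G.neighborFinset u).filter (fun w => w ∈ W)).card <
          ((G.neighborFinset u).filter (fun w => g w = 2)).card := by
        have h1 := Finset.card_le_card hsub
        have h2 := hB u hu1 hug
        omega
      have hnsub : ¬ ((G.neighborFinset u).filter (fun w => g w = 2) ⊆
          (G.neighborFinset u).filter (fun w => w ∈ W)) := by
        intro h
        exact absurd (Finset.card_le_card h) (by omega)
      obtain ⟨w, hwb, hws⟩ := Finset.not_subset.mp hnsub
      rw [Finset.mem_filter] at hwb
      have hwN : w ∈ G.neighborFinset u := hwb.1
      have hw2 : g w = 2 := hwb.2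
      have hwW : w ∉ W := by
        intro h
        exact hws (Finset.mem_filter.mpr ⟨hwN, h⟩)
      have hW2 : ∀ x ∈ insert w W, g x = 2 := by
        intro x hx
        rcases Finset.mem_insert.mp hx with h | h
        · rw [h]; exact hw2
        · exact hW x h
      have hmono : ∀ y, ((G.neighborFinset y).filter (fun x => x ∈ W)).card ≤
          ((G.neighborFinset y).filter (fun x => x ∈ insert w W)).card := by
        intro y
        apply Finset.card_le_card
        intro x hx
        rw [Finset.mem_filter] at hx ⊢
        exact ⟨hx.1, Finset.mem_insert_of_mem hx.2⟩
      have hucnt : 2 ≤ ((G.neighborFinset u).filter (fun x => x ∈ insert w W)).card := by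
        have hins : insert w ((G.neighborFinset u).filter (fun x => x ∈ W)) ⊆
            (G.neighborFinset u).filter (fun x => x ∈ insert w W) := by
          intro x hx
          rcases Finset.mem_insert.mp hx with h | h
          · rw [h]
            exact Finset.mem_filter.mpr ⟨hwN, Finset.mem_insert_self w W⟩
          · rw [Finset.mem_filter] at h ⊢
            exact ⟨h.1, Finset.mem_insert_of_mem h.2⟩
        have hcardins : (insert w ((G.neighborFinset u).filter (fun x => x ∈ W))).card = 2 := by
          rw [Finset.card_insert_of_notMem (fun h => hwW (Finset.mem_filter.mp h).2), hcnt]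
        have := Finset.card_le_card hins
        omega
      have humem : u ∈ Finset.univ.filter (fun u => f u = 1 ∧ g u = 1 ∧
          ((G.neighborFinset u).filter (fun x => x ∈ W)).card ≤ 1) := by
        simp only [Finset.mem_filter, Finset.mem_univ, true_and]
        exact ⟨hu1, hug, by omega⟩
      have hmeasure : (Finset.univ.filter (fun y => f y = 1 ∧ g y = 1 ∧
          ((G.neighborFinset y).filter (fun x => x ∈ insert w W)).card ≤ 1)).card ≤ n := by
        have hss : Finset.univ.filter (fun y => f y = 1 ∧ g y = 1 ∧
            ((G.neighborFinset y).filter (fun x => x ∈ insert w W)).card ≤ 1) ⊆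
            (Finset.univ.filter (fun y => f y = 1 ∧ g y = 1 ∧
            ((G.neighborFinset y).filter (fun x => x ∈ W)).card ≤ 1)).erase u := by
          intro y hy
          simp only [Finset.mem_filter, Finset.mem_univ, true_and] at hy
          rw [Finset.mem_erase]
          constructor
          · intro e; subst e
            have := hy.2.2
            omega
          · simp only [Finset.mem_filter, Finset.mem_univ, true_and]
            exact ⟨hy.1, hy.2.1, le_trans (hmono y) hy.2.2⟩
        have h1 := Finset.card_le_card hss
        rw [Finset.card_erase_of_mem humem] at h1
        have h2 := Finset.card_pos.mpr ⟨u, humem⟩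
        omega
      obtain ⟨V', hWV, hV2, hVcard, hii⟩ := ih (insert w W) hW2 hmeasure
      refine ⟨V', le_trans (Finset.subset_insert w W) hWV, hV2, ?_, hii⟩
      rw [Finset.card_insert_of_notMem hwW] at hVcard
      omega
    · push_neg at hex
      refine ⟨W, subset_rfl, hW, by omega, ?_⟩
      intro u h1 h2
      exact hex u h1 h2

lemma backward {V : Type*} [Fintype V] [DecidableEq V] (G : SimpleGraph V)
    [DecidableRel G.Adj] (f : V → Fin 3) (V' : Finset V)
    (h2V : ∀ v, f v = 2 → v ∈ V')
    (hi : ∀ v ∈ V', ∃ u, G.Adj v u ∧ f u = 0 ∧ u ∉ V' ∧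
        (G.neighborFinset u).filter (fun w => w ∈ V') = {v})
    (hii : ∀ u, f u = 1 → u ∉ V' →
        ((G.neighborFinset u).filter (fun w => w ∈ V')).card ≠ 1) :
    ∃ g : V → Fin 3, Minimal (IsPRDF G) g ∧ f ≤ g := by
  classical
  set g : V → Fin 3 := fun v =>
    if v ∈ V' then 2
    else if f v = 0 ∧ ((G.neighborFinset v).filter (fun w => w ∈ V')).card = 1 then 0
    else 1 with hg
  have hg2 : ∀ v, g v = 2 ↔ v ∈ V' := by
    intro v
    constructor
    · intro h
      by_contra hv
      rw [hg] at h
      simp only [if_neg hv] at h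
      by_cases hc : f v = 0 ∧ ((G.neighborFinset v).filter (fun w => w ∈ V')).card = 1
      · rw [if_pos hc] at h; exact absurd h (by decide)
      · rw [if_neg hc] at h; exact absurd h (by decide)
    · intro h; rw [hg]; simp only [if_pos h]
  have hgmem : ∀ v ∈ V', g v = 2 := fun v hv => (hg2 v).mpr hv
  have hg0 : ∀ v, g v = 0 → v ∉ V' ∧ f v = 0 ∧
      ((G.neighborFinset v).filter (fun w => w ∈ V')).card = 1 := by
    intro v h
    rw [hg] at h
    by_cases hv : v ∈ V'
    · simp only [if_pos hv] at h; exact absurd h (by decide)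
    · simp only [if_neg hv] at h
      by_cases hc : f v = 0 ∧ ((G.neighborFinset v).filter (fun w => w ∈ V')).card = 1
      · exact ⟨hv, hc⟩
      · rw [if_neg hc] at h; exact absurd h (by decide)
  have hfg : f ≤ g := by
    intro v
    by_cases hv : v ∈ V'
    · rw [(hg2 v).mpr hv]; exact fin3_le2 _
    · rw [hg]
      simp only [if_neg hv]
      by_cases hc : f v = 0 ∧ ((G.neighborFinset v).filter (fun w => w ∈ V')).card = 1
      · rw [if_pos hc, hc.1]
      · rw [if_neg hc]
        rcases fin3_cases (f v) with h | h | h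
        · rw [h]; exact Fin.zero_le _
        · rw [h]
        · exact absurd (h2V v h) hv
  have hPg : IsPRDF G g := by
    intro v hv
    obtain ⟨hvV, hvf, hvc⟩ := hg0 v hv
    obtain ⟨u, hu⟩ := Finset.card_eq_one.mp hvc
    have humem : u ∈ (G.neighborFinset v).filter (fun w => w ∈ V') := by
      rw [hu]; exact Finset.mem_singleton_self u
    rw [Finset.mem_filter, SimpleGraph.mem_neighborFinset] at humem
    refine ⟨u, ⟨humem.1, hgmem u humem.2⟩, ?_⟩
    rintro y ⟨hyadj, hy2⟩
    have : y ∈ (G.neighborFinset v).filter (fun w => w ∈ V') := by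
      rw [Finset.mem_filter, SimpleGraph.mem_neighborFinset]
      exact ⟨hyadj, (hg2 y).mp hy2⟩
    rw [hu] at this
    exact Finset.mem_singleton.mp this
  refine ⟨g, ⟨hPg, ?_⟩, hfg⟩
  intro h hPh hle
  have step1 : ∀ v ∈ V', h v = 2 := by
    intro v hv
    obtain ⟨u, huadj, huf, huV, hufil⟩ := hi v hv
    have hgu : g u = 0 := by
      rw [hg]
      simp only [if_neg huV]
      rw [if_pos ⟨huf, by rw [hufil]; exact Finset.card_singleton v⟩]
    have hhu : h u = 0 := by
      have := hle u
      rw [hgu] at this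
      exact fin3_le0 _ this
    obtain ⟨x, ⟨hxadj, hx2⟩, _⟩ := hPh u hhu
    have hxV : x ∈ V' := (hg2 x).mp (fin3_eq2_of_le _ _ (hle x) hx2)
    have : x ∈ (G.neighborFinset u).filter (fun w => w ∈ V') := by
      rw [Finset.mem_filter, SimpleGraph.mem_neighborFinset]
      exact ⟨hxadj, hxV⟩
    rw [hufil] at this
    have hxv : x = v := Finset.mem_singleton.mp this
    rw [← hxv]; exact hx2
  intro v
  by_cases hv : v ∈ V'
  · rw [(hg2 v).mpr hv, step1 v hv]
  · rw [hg]
    simp only [if_neg hv]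
    by_cases hc : f v = 0 ∧ ((G.neighborFinset v).filter (fun w => w ∈ V')).card = 1
    · rw [if_pos hc]; exact Fin.zero_le _
    · rw [if_neg hc]
      have hhv : h v ≠ 0 := by
        intro hhv0
        obtain ⟨x, ⟨hxadj, hx2⟩, huniq⟩ := hPh v hhv0
        have hxV : x ∈ V' := (hg2 x).mp (fin3_eq2_of_le _ _ (hle x) hx2)
        have hfil : (G.neighborFinset v).filter (fun w => w ∈ V') = {x} := by
          apply Finset.eq_singleton_iff_unique_mem.mpr
          constructor
          · rw [Finset.mem_filter, SimpleGraph.mem_neighborFinset]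
            exact ⟨hxadj, hxV⟩
          · intro y hy
            rw [Finset.mem_filter, SimpleGraph.mem_neighborFinset] at hy
            exact huniq y ⟨hy.1, step1 y hy.2⟩
        have hcard1 : ((G.neighborFinset v).filter (fun w => w ∈ V')).card = 1 := by
          rw [hfil]; exact Finset.card_singleton x
        have hfv : f v ≠ 0 := fun h0 => hc ⟨h0, hcard1⟩
        have hfv1 : f v = 1 := by
          rcases fin3_cases (f v) with h0 | h0 | h0
          · exact absurd h0 hfv
          · exact h0
          · exact absurd (h2V v h0) hv
        exact hii v hfv1 hv hcard1
      rcases fin3_cases (h v) with h0 | h0 | h0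
      · exact absurd h0 hhv
      · rw [h0]
      · rw [h0]; exact (by decide : (1:Fin 3) ≤ 2)

theorem stmt13 {V : Type*} [Fintype V] [DecidableEq V] (G : SimpleGraph V)
    [DecidableRel G.Adj] (f : V → Fin 3) :
    (∃ g : V → Fin 3, Minimal (IsPRDF G) g ∧ f ≤ g) ↔
      (∃ V' : Finset V, V'.card ≤ weight f ∧
        (∀ v, f v = 2 → v ∈ V') ∧
        -- (i) every v ∈ V' has a private neighbor in V_0(f) \ V' w.r.t. G and V'
        (∀ v ∈ V', ∃ u, G.Adj v u ∧ f u = 0 ∧ u ∉ V' ∧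
          (G.neighborFinset u).filter (fun w => w ∈ V') = {v}) ∧
        -- (ii) |N(u) ∩ V'| ≠ 1 for every u ∈ V_1(f) \ V'
        (∀ u, f u = 1 → u ∉ V' →
          ((G.neighborFinset u).filter (fun w => w ∈ V')).card ≠ 1)) := by
  constructor
  · rintro ⟨g, hg, hfg⟩
    have hBfact : ∀ u, f u = 1 → g u = 1 →
        ((G.neighborFinset u).filter (fun w => g w = 2)).card ≠ 1 :=
      fun u _ h => lemB hg u h
    set A : Finset V := Finset.univ.filter (fun v => f v = 2) with hA
    set B : Finset V := Finset.univ.filter (fun v => f v = 1 ∧ g v = 2) with hB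
    set C : Finset V := Finset.univ.filter (fun v => f v = 1 ∧ g v = 1) with hC
    have hWg : ∀ w ∈ A ∪ B, g w = 2 := by
      intro w hw
      rcases Finset.mem_union.mp hw with h | h
      · rw [hA, Finset.mem_filter] at h
        exact fin3_eq2_of_le _ _ (hfg w) h.2
      · rw [hB, Finset.mem_filter] at h
        exact h.2.2
    have hstart : (Finset.univ.filter (fun u => f u = 1 ∧ g u = 1 ∧
        ((G.neighborFinset u).filter (fun w => w ∈ A ∪ B)).card ≤ 1)).card ≤ C.card := by
      apply Finset.card_le_card
      intro u hu
      simp only [Finset.mem_filter, Finset.mem_univ, true_and] at hu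
      rw [hC, Finset.mem_filter]
      exact ⟨Finset.mem_univ u, hu.1, hu.2.1⟩
    obtain ⟨V', hWV, hV2, hVcard, hii⟩ := extend G f g hBfact C.card (A ∪ B) hWg hstart
    have hABdisj : Disjoint A B := by
      rw [Finset.disjoint_left]
      intro a ha hb
      rw [hA, Finset.mem_filter] at ha
      rw [hB, Finset.mem_filter] at hb
      rw [ha.2] at hb
      exact absurd hb.2.1 (by decide)
    have hABCdisj : Disjoint (A ∪ B) C := by
      rw [Finset.disjoint_left]
      intro a ha hc
      rw [hC, Finset.mem_filter] at hc
      rcases Finset.mem_union.mp ha with h | h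
      · rw [hA, Finset.mem_filter] at h
        rw [h.2] at hc
        exact absurd hc.2.1 (by decide)
      · rw [hB, Finset.mem_filter] at h
        rw [h.2.2] at hc
        exact absurd hc.2.2 (by decide)
    have hweight : A.card + B.card + C.card ≤ weight f := by
      have hcardU : (A ∪ B ∪ C).card = A.card + B.card + C.card := by
        rw [Finset.card_union_of_disjoint hABCdisj, Finset.card_union_of_disjoint hABdisj]
      have hge1 : ∀ v ∈ A ∪ B ∪ C, 1 ≤ (f v : ℕ) := by
        intro v hv
        rcases Finset.mem_union.mp hv with h | h
        · rcases Finset.mem_union.mp h with h' | h'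
          · rw [hA, Finset.mem_filter] at h'; rw [h'.2]; norm_num
          · rw [hB, Finset.mem_filter] at h'; rw [h'.2.1]; norm_num
        · rw [hC, Finset.mem_filter] at h; rw [h.2.1]; norm_num
      have h1 : (A ∪ B ∪ C).card ≤ ∑ v ∈ A ∪ B ∪ C, (f v : ℕ) := by
        have := Finset.card_nsmul_le_sum (A ∪ B ∪ C) (fun v => (f v : ℕ)) 1 hge1
        simpa using this
      have h2 : ∑ v ∈ A ∪ B ∪ C, (f v : ℕ) ≤ ∑ v, (f v : ℕ) :=
        Finset.sum_le_sum_of_subset (Finset.subset_univ _)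
      rw [hcardU] at h1
      exact le_trans h1 (le_trans h2 (le_of_eq rfl))
    refine ⟨V', ?_, ?_, ?_, ?_⟩
    · have hWcard : (A ∪ B).card ≤ A.card + B.card := Finset.card_union_le A B
      calc V'.card ≤ (A ∪ B).card + C.card := hVcard
        _ ≤ A.card + B.card + C.card := by omega
        _ ≤ weight f := hweight
    · intro v hv
      apply hWV
      apply Finset.mem_union_left
      rw [hA, Finset.mem_filter]
      exact ⟨Finset.mem_univ v, hv⟩
    · intro v hv
      obtain ⟨u, huadj, hu0, huniq⟩ := lemA hg v (hV2 v hv)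
      refine ⟨u, huadj, ?_, ?_, ?_⟩
      · have := hfg u
        rw [hu0] at this
        exact fin3_le0 _ this
      · intro huV
        rw [hV2 u huV] at hu0
        exact absurd hu0 (by decide)
      · apply Finset.eq_singleton_iff_unique_mem.mpr
        constructor
        · rw [Finset.mem_filter, SimpleGraph.mem_neighborFinset]
          exact ⟨huadj.symm, hv⟩
        · intro x hx
          rw [Finset.mem_filter, SimpleGraph.mem_neighborFinset] at hx
          exact huniq x hx.1 (hV2 x hx.2)
    · intro u hu1 huV
      have : (1 : Fin 3) ≤ g u := by
        have := hfg u
        rwa [hu1] at this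
      rcases fin3_one_le _ this with h | h
      · exact hii u hu1 h
      · exfalso
        apply huV
        apply hWV
        apply Finset.mem_union_right
        rw [hB, Finset.mem_filter]
        exact ⟨Finset.mem_univ u, hu1, h⟩
  · rintro ⟨V', _, h2V, hi, hii⟩
    exact backward G f V' h2V hi hii
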